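/- arXiv:0803.0724 — 2 statements merged into one kernel-verified Lean document; each statement's English description precedes it below -/
import Mathlib

section
/- Let β ∈ [0,2π) with β/(2π) irrational, and let (X_k) be a stationary complex process. If a subsequence n_j^{-1/2} S_{n_j}^{(β)} converges in distribution to a probability measure σ on ℂ, then σ is invariant under the rotation z ↦ e^{iβ} z, and hence (since {e^{-iβm}}_{m≥0} is dense in the circle) σ is invariant under every rotation of ℂ. -/
/-!
Put `Z_j = n_j^{-1/2} S_{n_j}^{(β)}`. Shifting the process by one step gives
`e^{iβ} S_n = S_n ∘ T + e^{inβ} X_0 - X_0 ∘ T^n`, so `e^{iβ} Z_j - Z_j ∘ T` tends to `0` in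
probability, while `Z_j ∘ T` has the same law as `Z_j`. Hence `e^{iβ} Z_j` converges in
distribution both to `σ` and to the image of `σ` under the rotation by `β`.
The angles `γ` for which `σ` is invariant under `z ↦ e^{iγ} z` form a closed subgroup of `ℝ`
containing `β` and `2π`; it is dense because `β / 2π` is irrational, hence all of `ℝ`.
-/

open Complex MeasureTheory Finset Real Filter
open scoped Topology

/-- The twisted sums `S_n^{(β)} = ∑_{k=0}^{n-1} e^{i(n-1-k)β} X_k`. -/
noncomputable def twistedSum {Ω : Type*} (X : ℕ → Ω → ℂ) (β : ℝ) (n : ℕ) (ω : Ω) : ℂ :=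
  ∑ k ∈ range n, Complex.exp (((n : ℂ) - 1 - k) * β * I) * X k ω

namespace MeasureTheory.TendstoInMeasure

variable {ι α E : Type*} {m : MeasurableSpace α} {μ : Measure α} {l : Filter ι}
  [SeminormedAddCommGroup E]

theorem of_norm_le_add {f g h : ι → α → E} (hg : TendstoInMeasure μ g l 0)
    (hh : TendstoInMeasure μ h l 0) (hfgh : ∀ i x, ‖f i x‖ ≤ ‖g i x‖ + ‖h i x‖) :
    TendstoInMeasure μ f l 0 := by
  rw [tendstoInMeasure_iff_norm] at *
  simp only [Pi.zero_apply, sub_zero] at *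
  intro ε hε
  have hsplit : ∀ i, μ {x | ε ≤ ‖f i x‖}
      ≤ μ {x | ε / 2 ≤ ‖g i x‖} + μ {x | ε / 2 ≤ ‖h i x‖} := fun i => by
    refine (measure_mono fun x (hx : ε ≤ ‖f i x‖) => ?_).trans (measure_union_le _ _)
    by_contra! hlt
    simp only [Set.mem_union, Set.mem_ofPred_eq, not_or, not_le] at hlt
    linarith [hfgh i x]
  have hsum := (hg _ (half_pos hε)).add (hh _ (half_pos hε))
  rw [add_zero] at hsum
  exact tendsto_of_tendsto_of_tendsto_of_le_of_le tendsto_const_nhds hsum (fun _ => zero_le)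
    hsplit

theorem comp_measurePreserving [MeasurableSpace E] [OpensMeasurableSpace E] {f : ι → α → E}
    {T : ι → α → α} (hf : TendstoInMeasure μ f l 0) (hfm : ∀ i, Measurable (f i))
    (hT : ∀ i, MeasurePreserving (T i) μ μ) :
    TendstoInMeasure μ (fun i => f i ∘ T i) l 0 := by
  rw [tendstoInMeasure_iff_norm] at *
  simp only [Pi.zero_apply, sub_zero] at *
  intro ε hε
  refine (hf ε hε).congr fun i => ((hT i).measure_preimage ?_).symm
  exact (measurableSet_le measurable_const
    (continuous_norm.measurable.comp (hfm i))).nullMeasurableSet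

end MeasureTheory.TendstoInMeasure

theorem exp_mul_twistedSum {Ω : Type*} (X : ℕ → Ω → ℂ) (β : ℝ) (n : ℕ) (ω : Ω) :
    Complex.exp (β * I) * twistedSum X β n ω
      = twistedSum (fun k => X (k + 1)) β n ω + (Complex.exp (n * β * I) * X 0 ω - X n ω) := by
  set f : ℕ → ℂ := fun k => Complex.exp (((n : ℂ) - k) * β * I) * X k ω
  have hlhs : Complex.exp (β * I) * twistedSum X β n ω = ∑ k ∈ range n, f k := by
    rw [twistedSum, mul_sum]
    refine sum_congr rfl fun k _ => ?_
    rw [← mul_assoc, ← Complex.exp_add]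
    congr 2
    ring
  have hshift : twistedSum (fun k => X (k + 1)) β n ω = ∑ k ∈ range n, f (k + 1) := by
    refine sum_congr rfl fun k _ => ?_
    simp only [f]
    congr 2
    push_cast
    ring
  have hends := (sum_range_succ f n).symm.trans (sum_range_succ' f n)
  simp only [f, sub_self, zero_mul, Complex.exp_zero, one_mul, CharP.cast_eq_zero,
    sub_zero] at hends
  rw [hlhs, hshift]
  linear_combination hends

theorem exp_mul_twistedSum_sub_twistedSum_comp {Ω : Type*} {X : ℕ → Ω → ℂ} {T : Ω → Ω}
    (hstat : ∀ k, X k = X 0 ∘ T^[k]) (β : ℝ) (n : ℕ) (ω : Ω) :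
    Complex.exp (β * I) * twistedSum X β n ω - twistedSum X β n (T ω)
      = Complex.exp (n * β * I) * X 0 ω - X 0 (T^[n] ω) := by
  have hX : (fun k => X (k + 1)) = fun k => X k ∘ T := by
    ext k ω
    simp [hstat k, hstat (k + 1)]
  rw [exp_mul_twistedSum, hX, hstat n]
  simp only [twistedSum, Function.comp_apply]
  ring

theorem measurable_twistedSum {Ω : Type*} [MeasurableSpace Ω] {X : ℕ → Ω → ℂ}
    (hX : ∀ k, Measurable (X k)) (β : ℝ) (n : ℕ) : Measurable (twistedSum X β n) :=
  measurable_sum _ fun k _ => (hX k).const_mul _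

theorem map_rotation_eq_of_tendstoInDistribution {Ω : Type*} [MeasurableSpace Ω]
    {P : Measure Ω} [IsProbabilityMeasure P] {T : Ω → Ω} (hT : MeasurePreserving T P P)
    {X : ℕ → Ω → ℂ} (hX : ∀ k, Measurable (X k)) (hstat : ∀ k, X k = X 0 ∘ T^[k]) (β : ℝ)
    {n : ℕ → ℕ} (hn : Tendsto n atTop atTop) {σ : Measure ℂ} [IsProbabilityMeasure σ]
    (h : TendstoInDistribution (fun j ω => (√(n j))⁻¹ • twistedSum X β (n j) ω) atTop id
      (fun _ => P) σ) :
    σ.map (fun z => Complex.exp (β * I) * z) = σ := by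
  set Z : ℕ → Ω → ℂ := fun j ω => (√(n j))⁻¹ • twistedSum X β (n j) ω
  have hZ : ∀ j, Measurable (Z j) := fun j =>
    (measurable_twistedSum hX β (n j)).const_smul ((√(n j))⁻¹ : ℝ)
  have hrot : Continuous fun z : ℂ => Complex.exp (β * I) * z := by fun_prop
  have hshift : TendstoInDistribution (fun j => Z j ∘ T) atTop id (fun _ => P) σ := by
    refine ⟨fun j => ((hZ j).comp hT.measurable).aemeasurable, h.aemeasurable_limit,
      h.tendsto.congr fun j => Subtype.ext ?_⟩
    change P.map (Z j) = P.map (Z j ∘ T)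
    rw [← Measure.map_map (hZ j) hT.measurable, hT.map_eq]
  set A : ℕ → Ω → ℂ := fun j => (√(n j))⁻¹ • X 0
  have hA : TendstoInMeasure P A atTop 0 := by
    refine tendstoInMeasure_of_tendsto_ae (fun j => ((hX 0).const_smul _).aestronglyMeasurable)
      (ae_of_all _ fun ω => ?_)
    have hsqrt : Tendsto (fun j => (√(n j))⁻¹) atTop (𝓝 0) :=
      tendsto_inv_atTop_zero.comp
        (tendsto_sqrt_atTop.comp (tendsto_natCast_atTop_atTop.comp hn))
    simpa only [A, Pi.smul_apply, Pi.zero_apply, zero_smul] using hsqrt.smul_const (X 0 ω)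
  have hdiff : TendstoInMeasure P ((fun j => (fun z => Complex.exp (β * I) * z) ∘ Z j)
      - fun j => Z j ∘ T) atTop 0 := by
    refine hA.of_norm_le_add (hA.comp_measurePreserving (fun j => (hX 0).const_smul _)
      fun j => hT.iterate (n j)) fun j ω => ?_
    simp only [Pi.sub_apply, Function.comp_apply, Z, A, Pi.smul_apply]
    rw [mul_smul_comm, ← smul_sub, exp_mul_twistedSum_sub_twistedSum_comp hstat, smul_sub]
    refine (norm_sub_le _ _).trans_eq ?_
    simp [Complex.norm_exp]
  have hrotZ := tendstoInDistribution_of_tendstoInMeasure_sub _ _ hshift hdiff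
    fun j => (hrot.measurable.comp (hZ j)).aemeasurable
  simpa using tendstoInDistribution_unique _ (h.continuous_comp hrot) hrotZ

theorem exp_mul_I_mul_comp (γ δ : ℝ) :
    ((fun z : ℂ => Complex.exp (γ * I) * z) ∘ fun z => Complex.exp (δ * I) * z)
      = fun z => Complex.exp (↑(γ + δ) * I) * z := by
  ext z
  simp only [Function.comp_apply, ← mul_assoc, ← Complex.exp_add]
  push_cast
  ring_nf

def rotationStabilizer (σ : Measure ℂ) : AddSubgroup ℝ where
  carrier := {γ | σ.map (fun z => Complex.exp (γ * I) * z) = σ}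
  zero_mem' := by simp
  add_mem' {γ δ} hγ hδ := by
    simp only [Set.mem_ofPred_eq] at *
    rw [← exp_mul_I_mul_comp, ← Measure.map_map (by fun_prop) (by fun_prop), hδ, hγ]
  neg_mem' {γ} hγ := by
    simp only [Set.mem_ofPred_eq] at *
    conv_lhs => rw [← hγ]
    rw [Measure.map_map (by fun_prop) (by fun_prop), exp_mul_I_mul_comp]
    simp

theorem mem_rotationStabilizer {σ : Measure ℂ} {γ : ℝ} :
    γ ∈ rotationStabilizer σ ↔ σ.map (fun z => Complex.exp (γ * I) * z) = σ :=
  Iff.rfl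

theorem isClosed_rotationStabilizer (σ : Measure ℂ) [IsProbabilityMeasure σ] :
    IsClosed (rotationStabilizer σ : Set ℝ) := by
  refine isSeqClosed_iff_isClosed.mp fun γs γ hγs hlim => ?_
  have hconv := (tendstoInDistribution_of_ae_tendsto (μ' := σ)
    (X := fun k z => Complex.exp (γs k * I) * z) (Z := fun z => Complex.exp (γ * I) * z)
    (fun k => by fun_prop) (by fun_prop) (ae_of_all _ fun z =>
      (Continuous.tendsto (f := fun t : ℝ => Complex.exp (t * I) * z) (by fun_prop) γ).comp
        hlim)).tendsto
  let σ' : ProbabilityMeasure ℂ := ⟨σ, inferInstance⟩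
  have hσ := hconv.congr (f₂ := fun _ => σ') fun k => by exact Subtype.ext (hγs k)
  exact (congrArg ProbabilityMeasure.toMeasure (tendsto_nhds_unique tendsto_const_nhds hσ)).symm

theorem rotationStabilizer_eq_top_of_irrational (σ : Measure ℂ) [IsProbabilityMeasure σ] {β : ℝ}
    (hβ : Irrational (β / (2 * π))) (hmem : β ∈ rotationStabilizer σ) :
    rotationStabilizer σ = ⊤ := by
  have htwoPi : 2 * π ∈ rotationStabilizer σ := by
    simp [mem_rotationStabilizer, Complex.exp_two_pi_mul_I]
  have hdense : Dense (rotationStabilizer σ : Set ℝ) :=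
    (dense_addSubgroupClosure_pair_iff.mpr hβ).mono <|
      AddSubgroup.closure_le _ |>.mpr (Set.pair_subset hmem htwoPi)
  rw [← AddSubgroup.coe_eq_univ, ← (isClosed_rotationStabilizer σ).closure_eq,
    hdense.closure_eq]

theorem stmt4_general {Ω : Type*} [MeasureSpace Ω] (P : Measure Ω) [IsProbabilityMeasure P]
    (β : ℝ) (hβ : Irrational (β / (2 * π)))
    (T : Ω → Ω) (hT : MeasurePreserving T P P)
    (X : ℕ → Ω → ℂ) (hmeas : ∀ k, Measurable (X k))
    (hstat : ∀ k : ℕ, X k = X 0 ∘ T^[k])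
    (nseq : ℕ → ℕ) (hmono : StrictMono nseq)
    (σ : ProbabilityMeasure ℂ)
    (μ : ℕ → ProbabilityMeasure ℂ)
    (hμ : ∀ j, (μ j : Measure ℂ)
        = P.map (fun ω => (Real.sqrt (nseq j))⁻¹ • twistedSum X β (nseq j) ω))
    (hconv : Tendsto μ atTop (nhds σ)) :
    (σ : Measure ℂ).map (fun z => Complex.exp (β * I) * z) = σ
    ∧ ∀ γ : ℝ, (σ : Measure ℂ).map (fun z => Complex.exp (γ * I) * z) = σ := by
  have hlaw : TendstoInDistribution (fun j ω => (√(nseq j))⁻¹ • twistedSum X β (nseq j) ω)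
      atTop id (fun _ => P) σ := by
    refine ⟨fun j => ((measurable_twistedSum hmeas β _).const_smul
      ((√(nseq j))⁻¹ : ℝ)).aemeasurable, aemeasurable_id, ?_⟩
    simp only [Measure.map_id]
    exact hconv.congr fun j => by exact Subtype.ext (hμ j)
  have hrot := map_rotation_eq_of_tendstoInDistribution hT hmeas hstat β hmono.tendsto_atTop hlaw
  have htop := rotationStabilizer_eq_top_of_irrational (σ : Measure ℂ) hβ hrot
  exact ⟨hrot, fun γ => mem_rotationStabilizer.mp (htop ▸ AddSubgroup.mem_top γ)⟩

/-- if `β/(2π)` is irrational, `(X_k)` is stationary (generated by a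
measure-preserving `T`), and a subsequence `n_j^{-1/2} S_{n_j}^{(β)}` converges
in distribution to `σ`, then `σ` is invariant under the rotation `z ↦ e^{iβ}z`,
and hence under every rotation of `ℂ`. -/
theorem stmt4 {Ω : Type*} [MeasureSpace Ω] (P : Measure Ω) [IsProbabilityMeasure P]
    (β : ℝ) (hβ : Irrational (β / (2 * π)))
    (T : Ω → Ω) (hT : MeasurePreserving T P P)
    (X : ℕ → Ω → ℂ) (hmeas : ∀ k, Measurable (X k))
    (hstat : ∀ k : ℕ, X k = X 0 ∘ T^[k])
    (nseq : ℕ → ℕ) (hmono : StrictMono nseq) (hpos : ∀ j, 1 ≤ nseq j)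
    (σ : ProbabilityMeasure ℂ)
    (μ : ℕ → ProbabilityMeasure ℂ)
    (hμ : ∀ j, (μ j : Measure ℂ)
        = P.map (fun ω => (Real.sqrt (nseq j))⁻¹ • twistedSum X β (nseq j) ω))
    (hconv : Tendsto μ atTop (nhds σ)) :
    (σ : Measure ℂ).map (fun z => Complex.exp (β * I) * z) = σ
    ∧ ∀ γ : ℝ, (σ : Measure ℂ).map (fun z => Complex.exp (γ * I) * z) = σ :=
  stmt4_general P β hβ T hT X hmeas hstat nseq hmono σ μ hμ hconv
end

section
/- Let Σ be a nonempty set of probability measures on ℝ² that is uniformly tight, with each σ ∈ Σ symmetric, and suppose for every σ ∈ Σ there is ρ ∈ Σ with σ = (ρ * ρ)(2^{1/2}·). Then there exists c > 0 such that σ([−r/2, r/2]²) ≥ c·r² for every σ ∈ Σ and every r ∈ (0,1). -/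
/-! With `ρ` a root of `σ`, symmetry of `ρ` turns `σ([-r/2, r/2]²)` into the autocorrelation
`T = (ρ ⊗ ρ){‖x - y‖ ≤ r/√2}` (balls of the sup norm on `ℝ × ℝ` are squares). For the window
mass `F z = ρ(z - C)`, `C` a ball of radius `a = r/(2√2)`, two points of one window are within
`2a`, so `∫ F² ≤ |C| T`; on the other hand `F` has integral at least `ρ(B_K) |C|` over the
thickened ball `B_{K+a}`. Cauchy–Schwarz on `B_{K+a}` then gives
`T ≥ ρ(B_K)² |C| / |B_{K+a}| = ρ(B_K)² (a / (K + a))^d`, and tightness makes `ρ(B_K) ≥ 1/2`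
uniformly on `Σ`. -/

open MeasureTheory NNReal Set Metric
open scoped ENNReal Pointwise

theorem sq_setLIntegral_le_measure_mul {α : Type*} [MeasurableSpace α] (μ : Measure α)
    (s : Set α) {f : α → ℝ≥0∞} (hf : AEMeasurable f (μ.restrict s)) :
    (∫⁻ x in s, f x ∂μ) ^ 2 ≤ μ s * ∫⁻ x in s, f x ^ 2 ∂μ := by
  have h := ENNReal.lintegral_mul_le_Lp_mul_Lq (μ.restrict s) Real.HolderConjugate.two_two
    aemeasurable_const hf (f := 1)
  simp only [Pi.mul_apply, Pi.one_apply, one_mul, ENNReal.one_rpow, lintegral_one,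
    Measure.restrict_apply_univ, one_div] at h
  rw [← ENNReal.mul_rpow_of_nonneg _ _ (by norm_num), ENNReal.le_rpow_inv_iff (by norm_num)] at h
  exact_mod_cast h

section AddCommGroup

variable {G : Type*} [AddCommGroup G] [MeasurableSpace G] [MeasurableAdd G] [MeasurableSub₂ G]
  (ν μ : Measure G) [SFinite ν] [SFinite μ] [ν.IsAddRightInvariant] {s t u v : Set G}

theorem lintegral_measure_sub_mem_sq_le (ht : MeasurableSet t) (hu : MeasurableSet u)
    (htu : t - t ⊆ u) :
    ∫⁻ z, μ {x | z - x ∈ t} ^ 2 ∂ν ≤ ν t * (μ.prod μ) {p | p.1 - p.2 ∈ u} := by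
  have hS : MeasurableSet {q : G × G × G | q.1 - q.2.1 ∈ t ∧ q.1 - q.2.2 ∈ t} :=
    (ht.preimage (measurable_fst.sub (measurable_fst.comp measurable_snd))).inter
      (ht.preimage (measurable_fst.sub (measurable_snd.comp measurable_snd)))
  calc ∫⁻ z, μ {x | z - x ∈ t} ^ 2 ∂ν
      = ∫⁻ z, (μ.prod μ) {p | z - p.1 ∈ t ∧ z - p.2 ∈ t} ∂ν := by
        simp_rw [sq, ← Measure.prod_prod]; rfl
    _ = ∫⁻ p, ν {z | z - p.1 ∈ t ∧ z - p.2 ∈ t} ∂(μ.prod μ) :=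
        (Measure.prod_apply hS).symm.trans (Measure.prod_apply_symm hS)
    _ ≤ ∫⁻ p, {p : G × G | p.1 - p.2 ∈ u}.indicator (fun _ => ν t) p ∂(μ.prod μ) := by
        refine lintegral_mono fun p => ?_
        by_cases hp : p.1 - p.2 ∈ u
        · rw [indicator_of_mem (s := {p : G × G | p.1 - p.2 ∈ u}) hp,
            ← (measurePreserving_sub_right ν p.1).measure_preimage ht.nullMeasurableSet]
          exact measure_mono fun z hz => hz.1
        · have hempty : {z | z - p.1 ∈ t ∧ z - p.2 ∈ t} = ∅ := by
            refine eq_empty_of_forall_notMem fun z hz => hp (htu ?_)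
            simpa using sub_mem_sub hz.2 hz.1
          simp [hempty]
    _ = ν t * (μ.prod μ) {p | p.1 - p.2 ∈ u} :=
        lintegral_indicator_const (measurable_sub hu) _

theorem measure_mul_le_setLIntegral_measure_sub_mem (hs : MeasurableSet s) (ht : MeasurableSet t)
    (hst : s + t ⊆ v) :
    μ s * ν t ≤ ∫⁻ z in v, μ {x | z - x ∈ t} ∂ν := by
  have hS : MeasurableSet {q : G × G | q.2 ∈ s ∧ q.1 - q.2 ∈ t} :=
    (hs.preimage measurable_snd).inter (measurable_sub ht)
  calc μ s * ν t = ∫⁻ x, s.indicator (fun _ => ν t) x ∂μ := by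
        rw [lintegral_indicator_const hs, mul_comm]
    _ = ∫⁻ x, ν {z | x ∈ s ∧ z - x ∈ t} ∂μ := by
        refine lintegral_congr fun x => ?_
        by_cases hx : x ∈ s
        · simp only [indicator_of_mem hx, hx, true_and]
          exact ((measurePreserving_sub_right ν x).measure_preimage ht.nullMeasurableSet).symm
        · simp [hx]
    _ = ∫⁻ z, μ {x | x ∈ s ∧ z - x ∈ t} ∂ν :=
        (Measure.prod_apply_symm hS).symm.trans (Measure.prod_apply hS)
    _ = ∫⁻ z in v, μ {x | x ∈ s ∧ z - x ∈ t} ∂ν := by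
        refine (setLIntegral_eq_of_support_subset fun z hz => hst ?_).symm
        obtain ⟨x, hxs, hxt⟩ := nonempty_of_measure_ne_zero hz
        simpa using add_mem_add hxs hxt
    _ ≤ ∫⁻ z in v, μ {x | z - x ∈ t} ∂ν :=
        lintegral_mono fun z => measure_mono fun x hx => hx.2

theorem measure_sq_mul_le_measure_mul_prod_sub_mem (hs : MeasurableSet s) (ht : MeasurableSet t)
    (hu : MeasurableSet u) (ht₀ : ν t ≠ 0) (ht_top : ν t ≠ ∞) (hst : s + t ⊆ v)
    (htu : t - t ⊆ u) :
    μ s ^ 2 * ν t ≤ ν v * (μ.prod μ) {p | p.1 - p.2 ∈ u} := by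
  have hF : AEMeasurable (fun z => μ {x | z - x ∈ t}) (ν.restrict v) :=
    (measurable_measure_prodMk_left (s := {q : G × G | q.1 - q.2 ∈ t})
      (measurable_sub ht)).aemeasurable
  have key : (μ s ^ 2 * ν t) * ν t ≤ (ν v * (μ.prod μ) {p | p.1 - p.2 ∈ u}) * ν t :=
    calc (μ s ^ 2 * ν t) * ν t = (μ s * ν t) ^ 2 := by ring
      _ ≤ (∫⁻ z in v, μ {x | z - x ∈ t} ∂ν) ^ 2 :=
        pow_le_pow_left' (measure_mul_le_setLIntegral_measure_sub_mem ν μ hs ht hst) 2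
      _ ≤ ν v * ∫⁻ z in v, μ {x | z - x ∈ t} ^ 2 ∂ν :=
        sq_setLIntegral_le_measure_mul ν v hF
      _ ≤ ν v * ∫⁻ z, μ {x | z - x ∈ t} ^ 2 ∂ν := by
        gcongr; exact Measure.restrict_le_self
      _ ≤ ν v * (ν t * (μ.prod μ) {p | p.1 - p.2 ∈ u}) := by
        gcongr; exact lintegral_measure_sub_mem_sq_le ν μ ht hu htu
      _ = (ν v * (μ.prod μ) {p | p.1 - p.2 ∈ u}) * ν t := by ring
  exact (ENNReal.mul_le_mul_iff_left ht₀ ht_top).mp key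

end AddCommGroup

section NormedSpace

variable {E : Type*} [NormedAddCommGroup E] [NormedSpace ℝ E] [FiniteDimensional ℝ E]
  [MeasurableSpace E] [BorelSpace E]

theorem measure_closedBall_sq_mul_le (μ : Measure E) [SFinite μ] {K δ : ℝ} (hK : 0 ≤ K)
    (hδ : 0 < δ) :
    μ (closedBall 0 K) ^ 2 * ENNReal.ofReal ((δ / 2) ^ Module.finrank ℝ E)
      ≤ ENNReal.ofReal ((K + δ / 2) ^ Module.finrank ℝ E)
        * (μ.prod μ) {p | p.1 - p.2 ∈ closedBall 0 δ} := by
  set ν : Measure E := Measure.addHaar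
  have hδ₂ : 0 < δ / 2 := half_pos hδ
  have hV₀ : ν (ball 0 1) ≠ 0 := (measure_ball_pos ν 0 one_pos).ne'
  have hV_top : ν (ball 0 1) ≠ ∞ := measure_ball_lt_top.ne
  have h := measure_sq_mul_le_measure_mul_prod_sub_mem ν μ (s := closedBall 0 K)
    (t := closedBall 0 (δ / 2)) (u := closedBall 0 δ) (v := closedBall 0 (K + δ / 2))
    measurableSet_closedBall measurableSet_closedBall measurableSet_closedBall
    (measure_closedBall_pos ν 0 hδ₂).ne' measure_closedBall_lt_top.ne
    (by rw [closedBall_add_closedBall hK hδ₂.le, add_zero])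
    (by rw [closedBall_sub_closedBall hδ₂.le hδ₂.le, sub_zero, add_halves])
  rw [Measure.addHaar_closedBall ν 0 hδ₂.le, Measure.addHaar_closedBall ν 0 (by positivity),
    ← mul_assoc, mul_right_comm _ (ν (ball 0 1))] at h
  exact (ENNReal.mul_le_mul_iff_left hV₀ hV_top).mp h

theorem ofReal_le_prod_measure_sub_mem_closedBall (μ : Measure E) [SFinite μ] {K δ m : ℝ}
    (hK : 0 ≤ K) (hδ : 0 < δ) (hm₀ : 0 ≤ m)
    (hm : ENNReal.ofReal m ≤ μ (closedBall 0 K)) :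
    ENNReal.ofReal (m ^ 2 * (δ / (2 * K + δ)) ^ Module.finrank ℝ E)
      ≤ (μ.prod μ) {p | p.1 - p.2 ∈ closedBall 0 δ} := by
  set d := Module.finrank ℝ E
  have hKδ : 0 < (K + δ / 2) ^ d := by positivity
  rw [← ENNReal.mul_le_mul_iff_right (ENNReal.ofReal_pos.2 hKδ).ne' ENNReal.ofReal_ne_top]
  calc ENNReal.ofReal ((K + δ / 2) ^ d) * ENNReal.ofReal (m ^ 2 * (δ / (2 * K + δ)) ^ d)
      = ENNReal.ofReal (m ^ 2 * (δ / 2) ^ d) := by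
        rw [← ENNReal.ofReal_mul hKδ.le, mul_left_comm, ← mul_pow]
        congr 3
        field_simp
    _ = ENNReal.ofReal m ^ 2 * ENNReal.ofReal ((δ / 2) ^ d) := by
        rw [ENNReal.ofReal_mul (by positivity), ENNReal.ofReal_pow hm₀]
    _ ≤ μ (closedBall 0 K) ^ 2 * ENNReal.ofReal ((δ / 2) ^ d) := by gcongr
    _ ≤ _ := measure_closedBall_sq_mul_le μ hK hδ

end NormedSpace

theorem map_add_prod_eq_map_sub_prod {G : Type*} [AddGroup G] [MeasurableSpace G]
    [MeasurableAdd₂ G] [MeasurableNeg G] (μ : Measure G) [SFinite μ]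
    (hμ : μ.map (fun x => -x) = μ) :
    (μ.prod μ).map (fun p => p.1 + p.2) = (μ.prod μ).map (fun p => p.1 - p.2) := by
  calc (μ.prod μ).map (fun p => p.1 + p.2)
      = ((μ.map id).prod (μ.map fun x => -x)).map (fun p => p.1 + p.2) := by
        rw [Measure.map_id, hμ]
    _ = (μ.prod μ).map (fun p => p.1 - p.2) := by
        rw [Measure.map_prod_map _ _ measurable_id measurable_neg,
          Measure.map_map (by fun_prop) (by fun_prop)]
        simp only [Function.comp_def, Prod.map_fst, Prod.map_snd, id, ← sub_eq_add_neg]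

theorem MeasureTheory.ProbabilityMeasure.ofReal_one_sub_le_measure_closedBall {E : Type*}
    [SeminormedAddCommGroup E] [MeasurableSpace E] [OpensMeasurableSpace E]
    (σ : ProbabilityMeasure E) {K ε : ℝ} (h : ((σ {x | K < ‖x‖} : ℝ≥0) : ℝ) ≤ ε) :
    ENNReal.ofReal (1 - ε) ≤ (σ : Measure E) (closedBall 0 K) := by
  have hcompl : {x : E | K < ‖x‖} = (closedBall 0 K)ᶜ := by
    ext x; simp
  have hout : (σ : Measure E) (closedBall 0 K)ᶜ ≤ ENNReal.ofReal ε := by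
    rw [← hcompl, ← ProbabilityMeasure.ennreal_coeFn_eq_coeFn_toMeasure,
      ← ENNReal.ofReal_coe_nnreal]
    exact ENNReal.ofReal_le_ofReal h
  calc ENNReal.ofReal (1 - ε) = 1 - ENNReal.ofReal ε := by
        rw [ENNReal.ofReal_sub 1 ((NNReal.coe_nonneg _).trans h), ENNReal.ofReal_one]
    _ ≤ 1 - (σ : Measure E) (closedBall 0 K)ᶜ := tsub_le_tsub_left hout 1
    _ = (σ : Measure E) (closedBall 0 K) := by
        rw [← prob_compl_eq_one_sub measurableSet_closedBall.compl, compl_compl]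

theorem Icc_neg_neg_eq_closedBall_zero (t : ℝ) :
    Icc ((-t, -t) : ℝ × ℝ) (t, t) = closedBall 0 t := by
  rw [show (0 : ℝ × ℝ) = (0, 0) from rfl, ← closedBall_prod_same, Real.closedBall_eq_Icc,
    Icc_prod_Icc, zero_sub, zero_add]

theorem map_smul_map_add_prod_apply_Icc {μ : Measure (ℝ × ℝ)} [SFinite μ]
    (hμ : μ.map (fun x => -x) = μ) (r : ℝ) :
    (((μ.prod μ).map (fun p => p.1 + p.2)).map (fun x => (Real.sqrt 2)⁻¹ • x))
        (Icc (-r / 2, -r / 2) (r / 2, r / 2))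
      = (μ.prod μ) {p | p.1 - p.2 ∈ closedBall 0 (Real.sqrt 2 * (r / 2))} := by
  rw [map_add_prod_eq_map_sub_prod μ hμ, Measure.map_map (by fun_prop) (by fun_prop),
    Measure.map_apply (by fun_prop) measurableSet_Icc, neg_div, Icc_neg_neg_eq_closedBall_zero]
  congr 1
  ext p
  simp only [mem_preimage, mem_ofPred_eq, mem_closedBall_zero_iff, Function.comp_apply, norm_smul,
    norm_inv, Real.norm_of_nonneg (Real.sqrt_nonneg 2),
    inv_mul_le_iff₀ (Real.sqrt_pos.2 zero_lt_two)]

theorem stmt8_general (S : Set (ProbabilityMeasure (ℝ × ℝ)))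
    (htight : ∀ ε : ℝ, 0 < ε → ∃ K : ℝ, 0 < K ∧ ∀ σ ∈ S,
        ((σ {x : ℝ × ℝ | K < ‖x‖} : ℝ≥0) : ℝ) ≤ ε)
    (hsym : ∀ σ ∈ S, (σ : Measure (ℝ × ℝ)).map (fun x => -x) = σ)
    (hdiv : ∀ σ ∈ S, ∃ ρ ∈ S,
        (σ : Measure (ℝ × ℝ))
          = (((ρ : Measure (ℝ × ℝ)).prod (ρ : Measure (ℝ × ℝ))).map
              (fun p : (ℝ × ℝ) × (ℝ × ℝ) => p.1 + p.2)).map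
              (fun x : ℝ × ℝ => (Real.sqrt 2)⁻¹ • x)) :
    ∃ c : ℝ, 0 < c ∧ ∀ σ ∈ S, ∀ r : ℝ, r ∈ Set.Ioo (0 : ℝ) 1 →
      ENNReal.ofReal (c * r ^ 2)
        ≤ (σ : Measure (ℝ × ℝ)) (Set.Icc ((-r / 2, -r / 2) : ℝ × ℝ) (r / 2, r / 2)) := by
  obtain ⟨K, hK, hKS⟩ := htight (1 / 2) (by norm_num)
  refine ⟨1 / (32 * (K + 1) ^ 2), by positivity, fun σ hσ r ⟨hr₀, hr₁⟩ => ?_⟩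
  obtain ⟨ρ, hρ, hσρ⟩ := hdiv σ hσ
  have hmass : ENNReal.ofReal (1 / 2) ≤ (ρ : Measure (ℝ × ℝ)) (closedBall 0 K) := by
    convert ρ.ofReal_one_sub_le_measure_closedBall (hKS ρ hρ) using 2
    norm_num
  set δ := Real.sqrt 2 * (r / 2)
  have hδ_sq : δ ^ 2 = r ^ 2 / 2 := by
    rw [mul_pow, Real.sq_sqrt zero_le_two]; ring
  have hδ_le : δ ≤ 2 := by
    nlinarith [Real.sqrt_nonneg 2, Real.sq_sqrt (zero_le_two : (0 : ℝ) ≤ 2)]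
  rw [hσρ, map_smul_map_add_prod_apply_Icc (hsym ρ hρ)]
  refine le_trans (ENNReal.ofReal_le_ofReal ?_)
    (ofReal_le_prod_measure_sub_mem_closedBall _ hK.le (by positivity) (by norm_num) hmass)
  simp only [Module.finrank_prod, Module.finrank_self]
  calc 1 / (32 * (K + 1) ^ 2) * r ^ 2 = (1 / 2) ^ 2 * (δ ^ 2 / (2 * K + 2) ^ 2) := by
        rw [hδ_sq]; field_simp; ring
    _ ≤ (1 / 2) ^ 2 * (δ ^ 2 / (2 * K + δ) ^ 2) := by gcongr
    _ = (1 / 2) ^ 2 * (δ / (2 * K + δ)) ^ 2 := by rw [div_pow δ]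

/-- a nonempty, uniformly tight family `Σ` of symmetric probability
measures on `ℝ²` which is closed under the divisibility relation
`σ = (ρ * ρ)(2^{1/2}·)` satisfies a uniform lower bound
`σ([-r/2,r/2]²) ≥ c·r²` for all `σ ∈ Σ` and `r ∈ (0,1)`. -/
theorem stmt8 (S : Set (ProbabilityMeasure (ℝ × ℝ))) (hne : S.Nonempty)
    (htight : ∀ ε : ℝ, 0 < ε → ∃ K : ℝ, 0 < K ∧ ∀ σ ∈ S,
        ((σ {x : ℝ × ℝ | K < ‖x‖} : ℝ≥0) : ℝ) ≤ ε)
    (hsym : ∀ σ ∈ S, (σ : Measure (ℝ × ℝ)).map (fun x => -x) = σ)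
    (hdiv : ∀ σ ∈ S, ∃ ρ ∈ S,
        (σ : Measure (ℝ × ℝ))
          = (((ρ : Measure (ℝ × ℝ)).prod (ρ : Measure (ℝ × ℝ))).map
              (fun p : (ℝ × ℝ) × (ℝ × ℝ) => p.1 + p.2)).map
              (fun x : ℝ × ℝ => (Real.sqrt 2)⁻¹ • x)) :
    ∃ c : ℝ, 0 < c ∧ ∀ σ ∈ S, ∀ r : ℝ, r ∈ Set.Ioo (0 : ℝ) 1 →
      ENNReal.ofReal (c * r ^ 2)
        ≤ (σ : Measure (ℝ × ℝ)) (Set.Icc ((-r / 2, -r / 2) : ℝ × ℝ) (r / 2, r / 2)) :=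
  stmt8_general S htight hsym hdiv
end
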